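/- Let 𝕂 be ℝ or ℂ, let 1 ≤ p_1, …, p_n ≤ q ≤ s < ∞, and let E_1, …, E_n, F be Banach spaces over 𝕂. Let A : E_1 × ⋯ × E_n → F be a continuous n-linear operator such that for every Banach space G over 𝕂 and every absolutely s-summing linear operator u : F → G, the composition u ∘ A is multiple (q;p_1,…,p_n)-summing. Then A is multiple (s,q;p_1,…,p_n)-mixing summing. -/

import Mathlib

open scoped BigOperators
noncomputable section

/-- The weak `ℓ^q` norm of a finite family in a normed space:
`sup_{‖φ‖ ≤ 1} (∑_j |φ(x_j)|^q)^{1/q}`. -/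
def weakLpNorm (𝕂 : Type*) [RCLike 𝕂] {E : Type*} [NormedAddCommGroup E] [NormedSpace 𝕂 E]
    {J : Type*} [Fintype J] (q : ℝ) (x : J → E) : ℝ :=
  ⨆ φ : {φ : E →L[𝕂] 𝕂 // ‖φ‖ ≤ 1}, (∑ j, ‖φ.1 (x j)‖ ^ q) ^ (1 / q)

/-- `T` is multiple `(p;p₁,…,pₙ)`-summing. -/
def MultipleSumming (𝕂 : Type*) [RCLike 𝕂] {n : ℕ} {E : Fin n → Type*}
    [∀ i, NormedAddCommGroup (E i)] [∀ i, NormedSpace 𝕂 (E i)]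
    {G : Type*} [NormedAddCommGroup G] [NormedSpace 𝕂 G]
    (p : ℝ) (q : Fin n → ℝ) (T : ((i : Fin n) → E i) → G) : Prop :=
  ∃ C : ℝ, 0 ≤ C ∧ ∀ (m : ℕ) (x : (i : Fin n) → Fin m → E i),
    (∑ j : Fin n → Fin m, ‖T (fun i => x i (j i))‖ ^ p) ^ (1 / p) ≤
      C * ∏ i, weakLpNorm 𝕂 (q i) (x i)

/-- The multiple `(p;p₁,…,pₙ)`-summing norm of `T`: the infimum of the admissible
constants. -/
def masNorm (𝕂 : Type*) [RCLike 𝕂] {n : ℕ} {E : Fin n → Type*}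
    [∀ i, NormedAddCommGroup (E i)] [∀ i, NormedSpace 𝕂 (E i)]
    {G : Type*} [NormedAddCommGroup G] [NormedSpace 𝕂 G]
    (p : ℝ) (q : Fin n → ℝ) (T : ((i : Fin n) → E i) → G) : ℝ :=
  sInf { C : ℝ | 0 ≤ C ∧ ∀ (m : ℕ) (x : (i : Fin n) → Fin m → E i),
    (∑ j : Fin n → Fin m, ‖T (fun i => x i (j i))‖ ^ p) ^ (1 / p) ≤
      C * ∏ i, weakLpNorm 𝕂 (q i) (x i) }

/-- `u` is an absolutely `r`-summing linear operator. -/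
def AbsolutelySummingOp (𝕂 : Type*) [RCLike 𝕂] {F G : Type*}
    [NormedAddCommGroup F] [NormedSpace 𝕂 F] [NormedAddCommGroup G] [NormedSpace 𝕂 G]
    (r : ℝ) (u : F →L[𝕂] G) : Prop :=
  ∃ C : ℝ, 0 ≤ C ∧ ∀ (k : ℕ) (y : Fin k → F),
    (∑ j : Fin k, ‖u (y j)‖ ^ r) ^ (1 / r) ≤ C * weakLpNorm 𝕂 r y

/-- The absolutely `r`-summing norm `π_r(u)`. -/
def piNorm (𝕂 : Type*) [RCLike 𝕂] {F G : Type*}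
    [NormedAddCommGroup F] [NormedSpace 𝕂 F] [NormedAddCommGroup G] [NormedSpace 𝕂 G]
    (r : ℝ) (u : F →L[𝕂] G) : ℝ :=
  sInf { C : ℝ | 0 ≤ C ∧ ∀ (k : ℕ) (y : Fin k → F),
    (∑ j : Fin k, ‖u (y j)‖ ^ r) ^ (1 / r) ≤ C * weakLpNorm 𝕂 r y }

/-- The mixed `(s,q)`-norm of a finite family `z` in `F`:
`inf ‖(τ_j)‖_{ℓ^ρ} ‖(y_j)‖_{w,s}` over factorizations `z_j = τ_j • y_j`, where
`1/ρ = 1/q - 1/s` (so `ρ = ∞`, i.e. the sup norm, when `s = q`). -/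
def mixedNorm (𝕂 : Type*) [RCLike 𝕂] {F : Type*} [NormedAddCommGroup F] [NormedSpace 𝕂 F]
    {J : Type*} [Fintype J] (s q : ℝ) (z : J → F) : ℝ :=
  sInf { c : ℝ | ∃ τ : J → 𝕂, ∃ y : J → F, (∀ j, z j = τ j • y j) ∧
      c = (if s = q then ⨆ j, ‖τ j‖
           else (∑ j, ‖τ j‖ ^ (1 / q - 1 / s)⁻¹) ^ (1 / q - 1 / s)) * weakLpNorm 𝕂 s y }

/-- `A` is multiple `(s,q;p₁,…,pₙ)`-mixing summing. -/
def MultipleMixingSumming (𝕂 : Type*) [RCLike 𝕂] {n : ℕ} {E : Fin n → Type*}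
    [∀ i, NormedAddCommGroup (E i)] [∀ i, NormedSpace 𝕂 (E i)]
    {F : Type*} [NormedAddCommGroup F] [NormedSpace 𝕂 F]
    (s q : ℝ) (p : Fin n → ℝ) (A : ((i : Fin n) → E i) → F) : Prop :=
  ∃ σ : ℝ, 0 ≤ σ ∧ ∀ (m : ℕ) (x : (i : Fin n) → Fin m → E i),
    mixedNorm 𝕂 s q (fun j : Fin n → Fin m => A (fun i => x i (j i))) ≤
      σ * ∏ i, weakLpNorm 𝕂 (p i) (x i)

/-- The multiple `(s,q;p₁,…,pₙ)`-mixing summing norm of `A`. -/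
def mixingNorm (𝕂 : Type*) [RCLike 𝕂] {n : ℕ} {E : Fin n → Type*}
    [∀ i, NormedAddCommGroup (E i)] [∀ i, NormedSpace 𝕂 (E i)]
    {F : Type*} [NormedAddCommGroup F] [NormedSpace 𝕂 F]
    (s q : ℝ) (p : Fin n → ℝ) (A : ((i : Fin n) → E i) → F) : ℝ :=
  sInf { σ : ℝ | 0 ≤ σ ∧ ∀ (m : ℕ) (x : (i : Fin n) → Fin m → E i),
    mixedNorm 𝕂 s q (fun j : Fin n → Fin m => A (fun i => x i (j i))) ≤
      σ * ∏ i, weakLpNorm 𝕂 (p i) (x i) }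

/-!
Each family of functionals `ψ` with `∑ ‖ψ k‖ ^ s < ∞` gives an absolutely `s`-summing map
`z ↦ (ψ k z)_k` into `ℓ^s`, so by hypothesis
`(∑_j (∑_k ‖ψ k (A x_j)‖ ^ s) ^ (q/s)) ^ (1/q) ≤ C_ψ ∏_i ‖x^(i)‖_{w,p_i}`. A gliding hump (glue
the families that violate the bound `4 ^ t`, damped by `2 ^ (-t)`) makes `C_ψ` uniform over the
finite families with `∑ ‖ψ k‖ ^ s ≤ 1`.

For a finite family `z`, the vectors `b_j = ∑_k ‖ψ k (z j)‖ ^ s` form a convex set. Let `a`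
maximize the concave function `∑_j b_j ^ (q/s)` on its closure. The first-order conditions at `a`
say that `z j = 0` wherever `a j = 0`, and that `∑_j a_j ^ (q/s - 1) ‖φ (z j)‖ ^ s ≤ ∑_j a_j ^ (q/s)`
for all `‖φ‖ ≤ 1`. Hence `z j = a_j ^ e • y j`, with `e = q/s (1/q - 1/s)`, is a factorization with
`‖(a_j ^ e)_j‖_ρ ‖y‖_{w,s} ≤ (∑_j a_j ^ (q/s)) ^ (1/q)`, which is at most the uniform bound.
-/

open scoped ENNReal

section WeakNorm

variable {𝕂 : Type*} [RCLike 𝕂] {E : Type*} [NormedAddCommGroup E] [NormedSpace 𝕂 E]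
  {J : Type*} [Fintype J]

theorem weakLpNorm_nonneg (r : ℝ) (x : J → E) : 0 ≤ weakLpNorm 𝕂 r x :=
  Real.iSup_nonneg fun _ => by positivity

theorem rpow_sum_le_weakLpNorm {r : ℝ} (hr : 0 ≤ r) (x : J → E) {φ : E →L[𝕂] 𝕂}
    (hφ : ‖φ‖ ≤ 1) : (∑ j, ‖φ (x j)‖ ^ r) ^ (1 / r) ≤ weakLpNorm 𝕂 r x := by
  refine le_ciSup (f := fun ψ : {ψ : E →L[𝕂] 𝕂 // ‖ψ‖ ≤ 1} => (∑ j, ‖ψ.1 (x j)‖ ^ r) ^ (1 / r))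
    ⟨(∑ j, ‖x j‖ ^ r) ^ (1 / r), ?_⟩ ⟨φ, hφ⟩
  rintro _ ⟨ψ, rfl⟩
  dsimp only
  gcongr with j
  exact ψ.1.le_of_opNorm_le ψ.2 _ |>.trans_eq (one_mul _)

theorem sum_norm_rpow_le_weakLpNorm_rpow {r : ℝ} (hr : 0 < r) (x : J → E) {φ : E →L[𝕂] 𝕂}
    (hφ : ‖φ‖ ≤ 1) : ∑ j, ‖φ (x j)‖ ^ r ≤ weakLpNorm 𝕂 r x ^ r := by
  have h := Real.rpow_le_rpow (by positivity) (rpow_sum_le_weakLpNorm hr.le x hφ) hr.le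
  rwa [← Real.rpow_mul (by positivity), one_div_mul_cancel hr.ne', Real.rpow_one] at h

theorem sum_norm_rpow_le_opNorm_rpow_mul {r : ℝ} (hr : 0 < r) (ψ : E →L[𝕂] 𝕂) (x : J → E) :
    ∑ j, ‖ψ (x j)‖ ^ r ≤ ‖ψ‖ ^ r * weakLpNorm 𝕂 r x ^ r := by
  rcases eq_or_ne ψ 0 with rfl | hψ
  · simp [Real.zero_rpow hr.ne']
  have hψ₀ : 0 < ‖ψ‖ := norm_pos_iff.mpr hψ
  have hunit : ‖((‖ψ‖⁻¹ : ℝ) : 𝕂) • ψ‖ ≤ 1 := by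
    rw [norm_smul, RCLike.norm_ofReal, abs_inv, abs_norm, inv_mul_cancel₀ hψ₀.ne']
  have h := sum_norm_rpow_le_weakLpNorm_rpow hr x hunit
  simp only [FunLike.coe_smul, Pi.smul_apply, smul_eq_mul, norm_mul, RCLike.norm_ofReal, abs_inv,
    abs_norm, Real.mul_rpow (inv_nonneg.2 hψ₀.le) (norm_nonneg _), ← Finset.mul_sum,
    Real.inv_rpow hψ₀.le] at h
  rwa [inv_mul_le_iff₀ (by positivity)] at h

end WeakNorm

theorem rpow_one_div_le_mul_of_le_mul_rpow {x c w r : ℝ} (hx : 0 ≤ x) (hc : 0 ≤ c) (hw : 0 ≤ w)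
    (hr : 0 < r) (h : x ≤ c * w ^ r) : x ^ (1 / r) ≤ c ^ (1 / r) * w := by
  calc x ^ (1 / r) ≤ (c * w ^ r) ^ (1 / r) := by gcongr
    _ = c ^ (1 / r) * w := by
      rw [Real.mul_rpow hc (by positivity), one_div, Real.rpow_rpow_inv hw hr.ne']

section LpOperator

variable {𝕂 : Type*} [RCLike 𝕂] {F : Type*} [NormedAddCommGroup F] [NormedSpace 𝕂 F]
  {ι : Type*} {r : ℝ}

theorem norm_apply_rpow_le (hr : 0 ≤ r) (ψ : F →L[𝕂] 𝕂) (v : F) :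
    ‖ψ v‖ ^ r ≤ ‖ψ‖ ^ r * ‖v‖ ^ r := by
  rw [← Real.mul_rpow (norm_nonneg _) (norm_nonneg _)]
  exact Real.rpow_le_rpow (norm_nonneg _) (ψ.le_opNorm v) hr

theorem Summable.norm_apply_rpow (hr : 0 ≤ r) {ψ : ι → F →L[𝕂] 𝕂}
    (hψ : Summable fun k => ‖ψ k‖ ^ r) (v : F) : Summable fun k => ‖ψ k v‖ ^ r :=
  .of_nonneg_of_le (fun _ => by positivity) (fun k => norm_apply_rpow_le hr (ψ k) v)
    (hψ.mul_right _)

theorem tsum_norm_apply_rpow_le (hr : 0 ≤ r) {ψ : ι → F →L[𝕂] 𝕂}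
    (hψ : Summable fun k => ‖ψ k‖ ^ r) (v : F) :
    ∑' k, ‖ψ k v‖ ^ r ≤ (∑' k, ‖ψ k‖ ^ r) * ‖v‖ ^ r := by
  rw [← tsum_mul_right]
  exact (hψ.norm_apply_rpow hr v).tsum_le_tsum (fun k => norm_apply_rpow_le hr _ _)
    (hψ.mul_right _)

variable {p : ℝ≥0∞} [Fact (1 ≤ p)]

def lpOfFunctionals (hp : 0 < p.toReal) (ψ : ι → F →L[𝕂] 𝕂)
    (hψ : Summable fun k => ‖ψ k‖ ^ p.toReal) : F →L[𝕂] lp (fun _ : ι => 𝕂) p :=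
  LinearMap.mkContinuous
    { toFun := fun z => ⟨fun k => ψ k z, memℓp_gen (hψ.norm_apply_rpow ENNReal.toReal_nonneg z)⟩
      map_add' := fun a b => Subtype.ext <| funext fun k => map_add (ψ k) a b
      map_smul' := fun c a => Subtype.ext <| funext fun k => map_smul (ψ k) c a }
    ((∑' k, ‖ψ k‖ ^ p.toReal) ^ (1 / p.toReal)) fun z => by
      rw [lp.norm_eq_tsum_rpow hp]
      exact rpow_one_div_le_mul_of_le_mul_rpow (tsum_nonneg fun _ => by positivity)
        (tsum_nonneg fun _ => by positivity) (norm_nonneg z) hp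
        (tsum_norm_apply_rpow_le hp.le hψ z)

theorem norm_lpOfFunctionals_rpow (hp : 0 < p.toReal) {ψ : ι → F →L[𝕂] 𝕂}
    (hψ : Summable fun k => ‖ψ k‖ ^ p.toReal) (z : F) :
    ‖lpOfFunctionals hp ψ hψ z‖ ^ p.toReal = ∑' k, ‖ψ k z‖ ^ p.toReal :=
  lp.norm_rpow_eq_tsum hp _

theorem absolutelySummingOp_lpOfFunctionals (hp : 0 < p.toReal) {ψ : ι → F →L[𝕂] 𝕂}
    (hψ : Summable fun k => ‖ψ k‖ ^ p.toReal) :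
    AbsolutelySummingOp 𝕂 p.toReal (lpOfFunctionals hp ψ hψ) := by
  refine ⟨(∑' k, ‖ψ k‖ ^ p.toReal) ^ (1 / p.toReal),
    Real.rpow_nonneg (tsum_nonneg fun _ => by positivity) _, fun N y =>
      rpow_one_div_le_mul_of_le_mul_rpow (by positivity) (tsum_nonneg fun _ => by positivity)
        (weakLpNorm_nonneg _ y) hp ?_⟩
  calc ∑ j, ‖lpOfFunctionals hp ψ hψ (y j)‖ ^ p.toReal
      = ∑' k, ∑ j, ‖ψ k (y j)‖ ^ p.toReal := by
        simp only [norm_lpOfFunctionals_rpow]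
        exact (Summable.tsum_finsetSum fun j _ => hψ.norm_apply_rpow hp.le (y j)).symm
    _ ≤ ∑' k, ‖ψ k‖ ^ p.toReal * weakLpNorm 𝕂 p.toReal y ^ p.toReal :=
        (summable_sum fun j _ => hψ.norm_apply_rpow hp.le (y j)).tsum_le_tsum
          (fun k => sum_norm_rpow_le_opNorm_rpow_mul hp (ψ k) y) (hψ.mul_right _)
    _ = (∑' k, ‖ψ k‖ ^ p.toReal) * weakLpNorm 𝕂 p.toReal y ^ p.toReal := tsum_mul_right

end LpOperator

section Shrink

universe u

variable {𝕂 : Type*} [RCLike 𝕂] {F : Type*} [NormedAddCommGroup F] [NormedSpace 𝕂 F] {r : ℝ}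

theorem AbsolutelySummingOp.of_norm_apply_eq {G G' : Type*} [NormedAddCommGroup G]
    [NormedSpace 𝕂 G] [NormedAddCommGroup G'] [NormedSpace 𝕂 G'] {u : F →L[𝕂] G}
    {v : F →L[𝕂] G'} (hu : AbsolutelySummingOp 𝕂 r u) (huv : ∀ z, ‖v z‖ = ‖u z‖) :
    AbsolutelySummingOp 𝕂 r v := by
  obtain ⟨C, hC, hCu⟩ := hu
  exact ⟨C, hC, fun N y => by simpa only [huv] using hCu N y⟩

theorem AbsolutelySummingOp.exists_shrink {L : Type*} [NormedAddCommGroup L] [NormedSpace 𝕂 L]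
    [CompleteSpace L] [Small.{u} L] {w : F →L[𝕂] L} (hw : AbsolutelySummingOp 𝕂 r w) :
    ∃ (G : Type u) (_ : NormedAddCommGroup G) (_ : NormedSpace 𝕂 G) (_ : CompleteSpace G)
      (v : F →L[𝕂] G), AbsolutelySummingOp 𝕂 r v ∧ ∀ z, ‖v z‖ = ‖w z‖ := by
  let e : Shrink.{u} L ≃ₗᵢ[𝕂] L := ⟨Shrink.linearEquiv 𝕂 L, fun _ => rfl⟩
  have : CompleteSpace (Shrink.{u} L) := e.toIsometryEquiv.completeSpace
  have hnorm (z : F) : ‖(e.symm.toContinuousLinearEquiv.toContinuousLinearMap.comp w) z‖ = ‖w z‖ :=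
    e.symm.norm_map (w z)
  exact ⟨Shrink.{u} L, inferInstance, inferInstance, this, _, hw.of_norm_apply_eq hnorm, hnorm⟩

instance RCLike.small : Small.{u} 𝕂 :=
  small_of_injective (f := fun z : 𝕂 => (RCLike.re z, RCLike.im z)) fun _ _ h =>
    RCLike.ext (congrArg Prod.fst h) (congrArg Prod.snd h)

theorem exists_absolutelySummingOp_norm_rpow_eq {s : ℝ} (hs : 1 ≤ s) {ι : Type}
    (ψ : ι → F →L[𝕂] 𝕂) (hψ : Summable fun k => ‖ψ k‖ ^ s) :
    ∃ (G : Type u) (_ : NormedAddCommGroup G) (_ : NormedSpace 𝕂 G) (_ : CompleteSpace G)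
      (v : F →L[𝕂] G), AbsolutelySummingOp 𝕂 s v ∧ ∀ z, ‖v z‖ ^ s = ∑' k, ‖ψ k z‖ ^ s := by
  have hs₀ : 0 < s := zero_lt_one.trans_le hs
  let p := ENNReal.ofReal s
  have : Fact (1 ≤ p) := ⟨ENNReal.one_le_ofReal.mpr hs⟩
  have hps : p.toReal = s := ENNReal.toReal_ofReal hs₀.le
  have : Small.{u} (lp (fun _ : ι => 𝕂) p) := small_of_injective (β := ι → 𝕂) Subtype.val_injective
  rw [← hps] at hψ
  obtain ⟨G, _, _, hG, v, hv, hvw⟩ :=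
    (absolutelySummingOp_lpOfFunctionals (hps ▸ hs₀) hψ).exists_shrink.{u}
  refine ⟨G, _, _, hG, v, hps ▸ hv, fun z => ?_⟩
  simpa only [hvw, hps] using norm_lpOfFunctionals_rpow (hps ▸ hs₀) hψ z

end Shrink

section GlidingHump

variable {𝕂 : Type*} [RCLike 𝕂] {F : Type*} [NormedAddCommGroup F] [NormedSpace 𝕂 F] {s q : ℝ}

/-- The norm of `(ψ k (z j))_{j,k}` in `ℓ^q(ℓ^s)`. -/
def lqlsNorm (s q : ℝ) {ι J : Type*} [Fintype J] (ψ : ι → F →L[𝕂] 𝕂) (z : J → F) : ℝ :=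
  (∑ j, (∑' k, ‖ψ k (z j)‖ ^ s) ^ (q / s)) ^ (1 / q)

variable {ι J : Type*} [Fintype J]

theorem lqlsNorm_smul (hs : 0 < s) (hq : 0 < q) {c : ℝ} (hc : 0 ≤ c) (ψ : ι → F →L[𝕂] 𝕂)
    (z : J → F) : lqlsNorm s q (fun k => (c : 𝕂) • ψ k) z = c * lqlsNorm s q ψ z := by
  have hcs : ∀ X, 0 ≤ X → ((c ^ s * X) ^ (q / s)) = c ^ q * X ^ (q / s) := fun X hX => by
    rw [Real.mul_rpow (by positivity) hX, ← Real.rpow_mul hc, mul_div_cancel₀ _ hs.ne']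
  simp only [lqlsNorm, FunLike.coe_smul, Pi.smul_apply, smul_eq_mul, norm_mul,
    RCLike.norm_ofReal, abs_of_nonneg hc, Real.mul_rpow hc (norm_nonneg _), tsum_mul_left]
  rw [Finset.sum_congr rfl fun j _ => hcs _ (tsum_nonneg fun _ => by positivity),
    ← Finset.mul_sum, Real.mul_rpow (by positivity)
      (Finset.sum_nonneg fun _ _ => Real.rpow_nonneg (tsum_nonneg fun _ => by positivity) _),
    one_div, Real.rpow_rpow_inv hc hq.ne']

theorem lqlsNorm_comp_le (hs : 0 ≤ s) (hq : 0 ≤ q) {ι' : Type*} {ψ : ι → F →L[𝕂] 𝕂}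
    (hψ : Summable fun k => ‖ψ k‖ ^ s) {e : ι' → ι} (he : Function.Injective e) (z : J → F) :
    lqlsNorm s q (ψ ∘ e) z ≤ lqlsNorm s q ψ z := by
  unfold lqlsNorm
  gcongr with j
  exact tsum_comp_le_tsum_of_inj (hψ.norm_apply_rpow hs (z j)) (fun _ => by positivity) he

theorem summable_norm_rpow_geometric_sigma (hs : 1 ≤ s) {ι : ℕ → Type*} [∀ t, Fintype (ι t)]
    {ψ : ∀ t, ι t → F →L[𝕂] 𝕂} (hψ : ∀ t, ∑ k, ‖ψ t k‖ ^ s ≤ 1) :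
    Summable fun k : Σ t, ι t => ‖(((1 / 2 : ℝ) ^ k.1 : ℝ) : 𝕂) • ψ k.1 k.2‖ ^ s := by
  have hterm (t : ℕ) (k : ι t) :
      ‖(((1 / 2 : ℝ) ^ t : ℝ) : 𝕂) • ψ t k‖ ^ s = ((1 / 2 : ℝ) ^ t) ^ s * ‖ψ t k‖ ^ s := by
    rw [norm_smul, RCLike.norm_ofReal, abs_of_nonneg (by positivity),
      Real.mul_rpow (by positivity) (norm_nonneg _)]
  refine (summable_sigma_of_nonneg fun _ => by positivity).2
    ⟨fun _ => .of_finite, .of_nonneg_of_le (fun _ => tsum_nonneg fun _ => by positivity)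
      (fun t => ?_) (summable_geometric_of_lt_one (by norm_num) (by norm_num : (1 / 2 : ℝ) < 1))⟩
  rw [tsum_fintype]
  simp only [hterm, ← Finset.mul_sum]
  calc ((1 / 2 : ℝ) ^ t) ^ s * ∑ k, ‖ψ t k‖ ^ s ≤ ((1 / 2 : ℝ) ^ t) ^ s * 1 := by
        gcongr
        exact hψ t
    _ ≤ ((1 / 2 : ℝ) ^ t) ^ (1 : ℝ) := by
        rw [mul_one]
        exact Real.rpow_le_rpow_of_exponent_ge (by positivity)
          (pow_le_one₀ (by norm_num) (by norm_num)) hs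
    _ = (1 / 2) ^ t := Real.rpow_one _

theorem exists_uniform_bound_lqlsNorm (hs : 1 ≤ s) (hq : 0 < q) {M : Type*} {J : M → Type*}
    [∀ m, Fintype (J m)] (z : ∀ m, J m → F) (P : M → ℝ) (hP : ∀ m, 0 ≤ P m)
    (H : ∀ (ι : Type) (ψ : ι → F →L[𝕂] 𝕂), Summable (fun k => ‖ψ k‖ ^ s) →
      ∃ C, ∀ m, lqlsNorm s q ψ (z m) ≤ C * P m) :
    ∃ σ, 0 ≤ σ ∧ ∀ (ι : Type) [Fintype ι] (ψ : ι → F →L[𝕂] 𝕂), ∑ k, ‖ψ k‖ ^ s ≤ 1 →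
      ∀ m, lqlsNorm s q ψ (z m) ≤ σ * P m := by
  by_contra! hcon
  choose ι _ ψ hψ m hm using fun t : ℕ => hcon (4 ^ t) (by positivity)
  obtain ⟨C, hC⟩ := H _ _ (summable_norm_rpow_geometric_sigma hs hψ)
  obtain ⟨t, hCt⟩ := pow_unbounded_of_one_lt C (one_lt_two (α := ℝ))
  have hblock : (1 / 2) ^ t * lqlsNorm s q (ψ t) (z (m t)) ≤ C * P (m t) := by
    rw [← lqlsNorm_smul (zero_lt_one.trans_le hs) hq (by positivity)]
    exact (lqlsNorm_comp_le (zero_le_one.trans hs) hq.le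
      (summable_norm_rpow_geometric_sigma hs hψ) sigma_mk_injective _).trans (hC _)
  have h4 : (1 / 2 : ℝ) ^ t * 4 ^ t = 2 ^ t := by
    rw [← mul_pow]; norm_num
  have := mul_lt_mul_of_pos_left (hm t) (by positivity : (0 : ℝ) < (1 / 2) ^ t)
  nlinarith [mul_le_mul_of_nonneg_right hCt.le (hP (m t))]

end GlidingHump

section PowerSumMaximizer

theorem rpow_le_rpow_add_mul_sub {θ X A : ℝ} (hθ0 : 0 ≤ θ) (hθ1 : θ ≤ 1) (hX : 0 < X)
    (hA : 0 ≤ A) : A ^ θ ≤ X ^ θ + θ * X ^ (θ - 1) * (A - X) := by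
  have h := rpow_one_add_le_one_add_mul_self (s := A / X - 1)
    (by linarith [div_nonneg hA hX.le]) hθ0 hθ1
  rw [add_sub_cancel, Real.div_rpow hA hX.le, div_le_iff₀ (by positivity)] at h
  calc A ^ θ ≤ (1 + θ * (A / X - 1)) * X ^ θ := h
    _ = X ^ θ + θ * X ^ (θ - 1) * (A - X) := by
      rw [Real.rpow_sub_one hX.ne']
      field_simp

theorem rpow_sub_one_mul_self {x y : ℝ} (hx : 0 ≤ x) (hy : y ≠ 0) : x ^ (y - 1) * x = x ^ y := by
  rcases hx.eq_or_lt with rfl | hx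
  · simp [Real.zero_rpow hy]
  · rw [Real.rpow_sub_one hx.ne', div_mul_cancel₀ _ hx.ne']

theorem one_sub_mul_rpow_le_rpow_add {θ t x y : ℝ} (hθ0 : 0 ≤ θ) (hθ1 : θ ≤ 1) (ht0 : 0 ≤ t)
    (ht1 : t < 1) (hx : 0 ≤ x) (hy : 0 ≤ y) : (1 - t) * x ^ θ ≤ ((1 - t) * x + t * y) ^ θ := by
  calc (1 - t) * x ^ θ ≤ (1 - t) ^ θ * x ^ θ := by
        refine mul_le_mul_of_nonneg_right ?_ (Real.rpow_nonneg hx _)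
        simpa only [Real.rpow_one] using
          Real.rpow_le_rpow_of_exponent_ge (x := 1 - t) (by linarith) (by linarith) hθ1
    _ = ((1 - t) * x) ^ θ := (Real.mul_rpow (by linarith) hx).symm
    _ ≤ ((1 - t) * x + t * y) ^ θ :=
        Real.rpow_le_rpow (mul_nonneg (by linarith) hx) (le_add_of_nonneg_right (mul_nonneg ht0 hy))
          hθ0

theorem nonpos_of_forall_le_rpow_mul {c S α : ℝ} (hα : 0 < α)
    (h : ∀ t ∈ Set.Ioo (0 : ℝ) 1, c ≤ t ^ α * S) : c ≤ 0 := by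
  have hlim : Filter.Tendsto (fun t : ℝ => t ^ α * S) (nhdsWithin 0 (Set.Ioi 0)) (nhds 0) := by
    have h := ((Real.continuous_rpow_const hα.le).tendsto 0).mul_const S
    rw [Real.zero_rpow hα.ne', zero_mul] at h
    exact h.mono_left nhdsWithin_le_nhds
  exact ge_of_tendsto hlim <| by
    filter_upwards [Ioo_mem_nhdsGT (zero_lt_one' ℝ)] with t ht using h t ht

variable {J : Type*} [Fintype J] {θ : ℝ} {a b : J → ℝ}

/-- `x ↦ x ^ θ` has infinite slope at `0`, so moving from `a` towards `b` would gain at any `j`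
with `a j = 0 < b j`. -/
theorem eq_zero_of_forall_sum_rpow_segment_le (hθ0 : 0 < θ) (hθ1 : θ < 1) (ha : ∀ j, 0 ≤ a j)
    (hb : ∀ j, 0 ≤ b j)
    (hmax : ∀ t ∈ Set.Ioo (0 : ℝ) 1, ∑ j, ((1 - t) * a j + t * b j) ^ θ ≤ ∑ j, a j ^ θ)
    {j₀ : J} (hj₀ : a j₀ = 0) : b j₀ = 0 := by
  classical
  have hbound : ∀ t ∈ Set.Ioo (0 : ℝ) 1, b j₀ ^ θ ≤ t ^ (1 - θ) * ∑ j, a j ^ θ := by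
    rintro t ⟨ht0, ht1⟩
    have hterm (j : J) : (1 - t) * a j ^ θ + (if j₀ = j then t ^ θ * b j₀ ^ θ else 0)
        ≤ ((1 - t) * a j + t * b j) ^ θ := by
      split_ifs with h
      · subst h
        simp [hj₀, Real.zero_rpow hθ0.ne', Real.mul_rpow ht0.le (hb j₀)]
      · simpa only [add_zero] using
          one_sub_mul_rpow_le_rpow_add hθ0.le hθ1.le ht0.le ht1 (ha j) (hb j)
    have hsum := (Finset.sum_le_sum fun j _ => hterm j).trans (hmax t ⟨ht0, ht1⟩)
    rw [Finset.sum_add_distrib, Finset.sum_ite_eq, if_pos (Finset.mem_univ _),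
      ← Finset.mul_sum] at hsum
    have htt : t ^ θ * t ^ (1 - θ) = t := by
      rw [← Real.rpow_add ht0, add_sub_cancel, Real.rpow_one]
    have hSt : t ^ θ * b j₀ ^ θ ≤ t ^ θ * (t ^ (1 - θ) * ∑ j, a j ^ θ) := by
      rw [← mul_assoc, htt]; linarith
    exact le_of_mul_le_mul_left hSt (by positivity)
  have hle : b j₀ ^ θ ≤ 0 := nonpos_of_forall_le_rpow_mul (by linarith) hbound
  exact (Real.rpow_eq_zero (hb j₀) hθ0.ne').1 (le_antisymm hle (Real.rpow_nonneg (hb j₀) _))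

theorem sum_rpow_sub_one_mul_le_of_forall_sum_rpow_segment_le (hθ0 : 0 < θ) (hθ1 : θ < 1)
    (ha : ∀ j, 0 ≤ a j) (hb : ∀ j, 0 ≤ b j)
    (hmax : ∀ t ∈ Set.Ioo (0 : ℝ) 1, ∑ j, ((1 - t) * a j + t * b j) ^ θ ≤ ∑ j, a j ^ θ) :
    ∑ j, a j ^ (θ - 1) * b j ≤ ∑ j, a j ^ θ := by
  have hzero (j : J) (hj : a j = 0) : b j = 0 :=
    eq_zero_of_forall_sum_rpow_segment_le hθ0 hθ1 ha hb hmax hj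
  set g : ℝ → ℝ := fun t => ∑ j, ((1 - t) * a j + t * b j) ^ (θ - 1) * (b j - a j)
  have hg : ∀ t ∈ Set.Ioo (0 : ℝ) 1, g t ≤ 0 := by
    rintro t ⟨ht0, ht1⟩
    have hterm (j : J) : a j ^ θ ≤ ((1 - t) * a j + t * b j) ^ θ
        - θ * t * (((1 - t) * a j + t * b j) ^ (θ - 1) * (b j - a j)) := by
      rcases (ha j).eq_or_lt with h | h
      · simp [← h, hzero j h.symm, Real.zero_rpow hθ0.ne']
      · have hX : 0 < (1 - t) * a j + t * b j :=
          add_pos_of_pos_of_nonneg (mul_pos (by linarith) h) (mul_nonneg ht0.le (hb j))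
        have htan := rpow_le_rpow_add_mul_sub hθ0.le hθ1.le hX (ha j)
        linear_combination htan
    have hsum := Finset.sum_le_sum fun j (_ : j ∈ Finset.univ) => hterm j
    rw [Finset.sum_sub_distrib, ← Finset.mul_sum] at hsum
    have := hmax t ⟨ht0, ht1⟩
    exact nonpos_of_mul_nonpos_right (by linarith) (by positivity : 0 < θ * t)
  have hcont : ContinuousAt g 0 := by
    refine tendsto_finsetSum _ fun j _ => ?_
    rcases eq_or_ne (a j) 0 with h | h
    · simp only [h, hzero j h, sub_self, mul_zero]
      exact tendsto_const_nhds
    · exact ((ContinuousAt.rpow_const (by fun_prop) (Or.inl (by simpa))).mul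
        continuousAt_const).tendsto
  have hg0 : g 0 ≤ 0 := le_of_tendsto (hcont.tendsto.mono_left nhdsWithin_le_nhds) <| by
    filter_upwards [Ioo_mem_nhdsGT (zero_lt_one' ℝ)] with t ht using hg t ht
  simp only [g, sub_zero, one_mul, zero_mul, add_zero, mul_sub, Finset.sum_sub_distrib] at hg0
  simpa only [rpow_sub_one_mul_self (ha _) hθ0.ne', sub_nonpos] using hg0

end PowerSumMaximizer

section MixedNorm

variable {𝕂 : Type*} [RCLike 𝕂] {F : Type*} [NormedAddCommGroup F] [NormedSpace 𝕂 F]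
  {J : Type*} [Fintype J] {s q : ℝ}

theorem mixedNorm_le_of_eq_smul {z y : J → F} {τ : J → 𝕂} (hzy : ∀ j, z j = τ j • y j) :
    mixedNorm 𝕂 s q z ≤ (if s = q then ⨆ j, ‖τ j‖
      else (∑ j, ‖τ j‖ ^ (1 / q - 1 / s)⁻¹) ^ (1 / q - 1 / s)) * weakLpNorm 𝕂 s y := by
  refine csInf_le ⟨0, ?_⟩ ⟨τ, y, hzy, rfl⟩
  rintro c ⟨τ', y', -, rfl⟩
  refine mul_nonneg ?_ (weakLpNorm_nonneg s y')
  split_ifs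
  · exact Real.iSup_nonneg fun j => norm_nonneg _
  · positivity

theorem mixedNorm_self_le_weakLpNorm (z : J → F) : mixedNorm 𝕂 q q z ≤ weakLpNorm 𝕂 q z := by
  have h := mixedNorm_le_of_eq_smul (s := q) (q := q) (τ := fun _ => (1 : 𝕂))
    fun j => (one_smul 𝕂 (z j)).symm
  rw [if_pos rfl] at h
  exact h.trans (mul_le_of_le_one_left (weakLpNorm_nonneg _ _)
    (Real.iSup_le (fun _ => by simp) zero_le_one))

theorem mixedNorm_le_of_weights (hq : 0 < q) (hqs : q < s) (z : J → F) {a : J → ℝ}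
    (ha : ∀ j, 0 ≤ a j) (hz : ∀ j, a j = 0 → z j = 0)
    (hφ : ∀ φ : F →L[𝕂] 𝕂, ‖φ‖ ≤ 1 →
      ∑ j, a j ^ (q / s - 1) * ‖φ (z j)‖ ^ s ≤ ∑ j, a j ^ (q / s)) :
    mixedNorm 𝕂 s q z ≤ (∑ j, a j ^ (q / s)) ^ (1 / q) := by
  set S := ∑ j, a j ^ (q / s)
  have hS : 0 ≤ S := Finset.sum_nonneg fun j _ => Real.rpow_nonneg (ha j) _
  have hs : 0 < s := hq.trans hqs
  have hρ : 0 < 1 / q - 1 / s := sub_pos.2 (one_div_lt_one_div_of_lt hq hqs)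
  set e := q / s * (1 / q - 1 / s)
  set τ : J → 𝕂 := fun j => ((a j ^ e : ℝ) : 𝕂)
  have hτ (j : J) : ‖τ j‖ = a j ^ e := by
    simp [τ, abs_of_nonneg (Real.rpow_nonneg (ha j) _)]
  have hzy (j : J) : z j = τ j • ((τ j)⁻¹ • z j) := by
    rcases (ha j).eq_or_lt with h | h
    · simp [hz j h.symm]
    · rw [smul_smul, mul_inv_cancel₀, one_smul]
      exact RCLike.ofReal_ne_zero.2 (Real.rpow_pos_of_pos h e).ne'
  have hτS : ∑ j, ‖τ j‖ ^ (1 / q - 1 / s)⁻¹ = S := by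
    simp only [hτ, ← Real.rpow_mul (ha _), e, mul_inv_cancel_right₀ hρ.ne', S]
  have hy : weakLpNorm 𝕂 s (fun j => (τ j)⁻¹ • z j) ≤ S ^ (1 / s) := by
    refine Real.iSup_le (fun φ => Real.rpow_le_rpow (by positivity) ?_ (by positivity))
      (by positivity)
    calc ∑ j, ‖φ.1 ((τ j)⁻¹ • z j)‖ ^ s = ∑ j, a j ^ (q / s - 1) * ‖φ.1 (z j)‖ ^ s := by
          refine Finset.sum_congr rfl fun j _ => ?_
          rw [map_smul, smul_eq_mul, norm_mul, norm_inv, hτ,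
            Real.mul_rpow (inv_nonneg.2 (Real.rpow_nonneg (ha j) _)) (norm_nonneg _),
            Real.inv_rpow (Real.rpow_nonneg (ha j) _), ← Real.rpow_mul (ha j),
            ← Real.rpow_neg (ha j)]
          congr 2
          simp only [e]
          field_simp
          ring
      _ ≤ S := hφ φ.1 φ.2
  calc mixedNorm 𝕂 s q z ≤ S ^ (1 / q - 1 / s) * weakLpNorm 𝕂 s (fun j => (τ j)⁻¹ • z j) := by
        simpa only [if_neg hqs.ne', hτS] using mixedNorm_le_of_eq_smul (s := s) (q := q) hzy
    _ ≤ S ^ (1 / q - 1 / s) * S ^ (1 / s) := by gcongr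
    _ = S ^ (1 / q) := by
        rw [← Real.rpow_add' hS (by simp [hq.ne']), sub_add_cancel]

end MixedNorm

section Duality

variable {𝕂 : Type*} [RCLike 𝕂] {F : Type*} [NormedAddCommGroup F] [NormedSpace 𝕂 F]
  {J : Type*} {s q : ℝ}

/-- The vectors `(∫ ‖φ (z j)‖ ^ s dμ(φ))_j` for finitely supported subprobability measures `μ` on
the dual ball, written through the families `ψ k = μ{φ_k} ^ (1/s) • φ_k`. -/
def normRpowProfiles (𝕂 : Type*) [RCLike 𝕂] {F : Type*} [NormedAddCommGroup F]
    [NormedSpace 𝕂 F] (s : ℝ) (z : J → F) : Set (J → ℝ) :=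
  {b | ∃ (ι : Type) (_ : Fintype ι) (ψ : ι → F →L[𝕂] 𝕂),
    ∑ k, ‖ψ k‖ ^ s ≤ 1 ∧ b = fun j => ∑ k, ‖ψ k (z j)‖ ^ s}

theorem norm_ofReal_rpow_one_div_rpow (hs : 0 < s) {c : ℝ} (hc : 0 ≤ c) :
    ‖((c ^ (1 / s) : ℝ) : 𝕂)‖ ^ s = c := by
  rw [RCLike.norm_ofReal, abs_of_nonneg (by positivity), ← Real.rpow_mul hc,
    one_div_mul_cancel hs.ne', Real.rpow_one]

theorem convex_normRpowProfiles (hs : 0 < s) (z : J → F) :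
    Convex ℝ (normRpowProfiles 𝕂 s z) := by
  rintro _ ⟨ι, _, ψ, hψ, rfl⟩ _ ⟨ι', _, ψ', hψ', rfl⟩ c d hc hd hcd
  refine ⟨ι ⊕ ι', inferInstance,
    Sum.elim (fun k => ((c ^ (1 / s) : ℝ) : 𝕂) • ψ k) (fun k => ((d ^ (1 / s) : ℝ) : 𝕂) • ψ' k),
    ?_, ?_⟩
  · simp only [Fintype.sum_sum_type, Sum.elim_inl, Sum.elim_inr, norm_smul,
      Real.mul_rpow (norm_nonneg _) (norm_nonneg _), norm_ofReal_rpow_one_div_rpow hs hc,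
      norm_ofReal_rpow_one_div_rpow hs hd, ← Finset.mul_sum]
    nlinarith
  · ext j
    simp only [Fintype.sum_sum_type, Sum.elim_inl, Sum.elim_inr, FunLike.coe_smul, Pi.smul_apply,
      smul_eq_mul, norm_mul, Real.mul_rpow (norm_nonneg _) (norm_nonneg _),
      norm_ofReal_rpow_one_div_rpow hs hc, norm_ofReal_rpow_one_div_rpow hs hd,
      ← Finset.mul_sum, Pi.add_apply]

theorem normRpowProfiles_subset_pi (hs : 0 ≤ s) (z : J → F) :
    normRpowProfiles 𝕂 s z ⊆ Set.univ.pi fun j => Set.Icc 0 (‖z j‖ ^ s) := by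
  rintro _ ⟨ι, _, ψ, hψ, rfl⟩ j -
  refine ⟨by positivity, ?_⟩
  calc ∑ k, ‖ψ k (z j)‖ ^ s ≤ ∑ k, ‖ψ k‖ ^ s * ‖z j‖ ^ s :=
        Finset.sum_le_sum fun k _ => norm_apply_rpow_le hs (ψ k) (z j)
    _ ≤ ‖z j‖ ^ s := by
        rw [← Finset.sum_mul]
        exact mul_le_of_le_one_left (by positivity) hψ

theorem mem_normRpowProfiles (hs : 0 < s) (z : J → F) {φ : F →L[𝕂] 𝕂} (hφ : ‖φ‖ ≤ 1) :
    (fun j => ‖φ (z j)‖ ^ s) ∈ normRpowProfiles 𝕂 s z :=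
  ⟨Unit, inferInstance, fun _ => φ, by simpa using Real.rpow_le_one (norm_nonneg φ) hφ hs.le,
    by simp⟩

theorem mixedNorm_le_of_forall_mem_normRpowProfiles [Fintype J] (hq : 0 < q) (hqs : q < s)
    (z : J → F) {B : ℝ}
    (hB : ∀ b ∈ normRpowProfiles 𝕂 s z, (∑ j, b j ^ (q / s)) ^ (1 / q) ≤ B) :
    mixedNorm 𝕂 s q z ≤ B := by
  have hs : 0 < s := hq.trans hqs
  set θ := q / s
  have hθ0 : 0 < θ := div_pos hq hs
  have hθ1 : θ < 1 := (div_lt_one hs).2 hqs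
  set K := closure (normRpowProfiles 𝕂 s z)
  have hKpi : K ⊆ Set.univ.pi fun j => Set.Icc 0 (‖z j‖ ^ s) :=
    closure_minimal (normRpowProfiles_subset_pi hs.le z) (isClosed_set_pi fun _ _ => isClosed_Icc)
  have hcont : Continuous fun b : J → ℝ => ∑ j, b j ^ θ :=
    continuous_finsetSum _ fun j _ => (Real.continuous_rpow_const hθ0.le).comp (continuous_apply j)
  have hK : IsCompact K :=
    (isCompact_univ_pi fun j => isCompact_Icc).of_isClosed_subset isClosed_closure hKpi
  obtain ⟨a, haK, hamax⟩ := hK.exists_isMaxOn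
    ⟨_, subset_closure (mem_normRpowProfiles hs z (φ := 0) (by simp))⟩ hcont.continuousOn
  have ha (j : J) : 0 ≤ a j := (hKpi haK j (Set.mem_univ j)).1
  have haB : (∑ j, a j ^ θ) ^ (1 / q) ≤ B :=
    closure_minimal hB (isClosed_le (hcont.rpow_const fun _ => Or.inr (by positivity))
      continuous_const) haK
  have hseg {φ : F →L[𝕂] 𝕂} (hφ : ‖φ‖ ≤ 1) : ∀ t ∈ Set.Ioo (0 : ℝ) 1,
      ∑ j, ((1 - t) * a j + t * ‖φ (z j)‖ ^ s) ^ θ ≤ ∑ j, a j ^ θ := fun t ht => by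
    simpa using hamax ((convex_normRpowProfiles hs z).closure haK
      (subset_closure (mem_normRpowProfiles hs z hφ)) (sub_nonneg.2 ht.2.le) ht.1.le
      (sub_add_cancel 1 t))
  refine (mixedNorm_le_of_weights hq hqs z ha (fun j hj => ?_) fun φ hφ => ?_).trans haB
  · by_contra hzj
    obtain ⟨φ, hφ1, hφz⟩ := exists_dual_vector 𝕂 (z j) (norm_ne_zero_iff.2 hzj)
    have := eq_zero_of_forall_sum_rpow_segment_le hθ0 hθ1 ha (fun _ => by positivity)
      (hseg hφ1.le) hj
    simp [hφz, Real.rpow_eq_zero, hs.ne', hzj] at this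
  · exact sum_rpow_sub_one_mul_le_of_forall_sum_rpow_segment_le hθ0 hθ1 ha
      (fun _ => by positivity) (hseg hφ)

theorem mixedNorm_le_of_forall_lqlsNorm_le [Fintype J] (hq : 0 < q) (hqs : q ≤ s) (z : J → F)
    {B : ℝ} (hB : ∀ (ι : Type) [Fintype ι] (ψ : ι → F →L[𝕂] 𝕂), ∑ k, ‖ψ k‖ ^ s ≤ 1 →
      lqlsNorm s q ψ z ≤ B) :
    mixedNorm 𝕂 s q z ≤ B := by
  have hprof : ∀ b ∈ normRpowProfiles 𝕂 s z, (∑ j, b j ^ (q / s)) ^ (1 / q) ≤ B := by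
    rintro _ ⟨ι, _, ψ, hψ, rfl⟩
    simpa only [lqlsNorm, tsum_fintype] using hB ι ψ hψ
  rcases hqs.eq_or_lt with rfl | hlt
  · have : Nonempty {φ : F →L[𝕂] 𝕂 // ‖φ‖ ≤ 1} := ⟨⟨0, by simp⟩⟩
    refine (mixedNorm_self_le_weakLpNorm z).trans (ciSup_le fun φ => ?_)
    simpa [div_self hq.ne'] using hprof _ (mem_normRpowProfiles hq z φ.2)
  · exact mixedNorm_le_of_forall_mem_normRpowProfiles hq hlt z hprof

end Duality

universe uG

theorem multipleMixingSumming_of_comp_general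
    {𝕂 : Type*} [RCLike 𝕂] {n : ℕ} (hn : 1 ≤ n)
    (s q : ℝ) (p : Fin n → ℝ) (hp : ∀ k, 1 ≤ p k) (hpq : ∀ k, p k ≤ q) (hqs : q ≤ s)
    (E : Fin n → Type*) [∀ i, NormedAddCommGroup (E i)] [∀ i, NormedSpace 𝕂 (E i)]
    (F : Type*) [NormedAddCommGroup F] [NormedSpace 𝕂 F]
    (A : ContinuousMultilinearMap 𝕂 E F)
    (h : ∀ (G : Type uG) [NormedAddCommGroup G] [NormedSpace 𝕂 G] [CompleteSpace G]
      (u : F →L[𝕂] G), AbsolutelySummingOp 𝕂 s u →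
        MultipleSumming 𝕂 q p (fun x => u (A x))) :
    MultipleMixingSumming 𝕂 s q p (⇑A) := by
  have hq : 1 ≤ q := (hp ⟨0, hn⟩).trans (hpq ⟨0, hn⟩)
  have hs : 1 ≤ s := hq.trans hqs
  obtain ⟨σ, hσ, hσA⟩ := exists_uniform_bound_lqlsNorm (𝕂 := 𝕂) hs (zero_lt_one.trans_le hq)
    (fun mx : Σ m : ℕ, ((i : Fin n) → Fin m → E i) =>
      fun j : Fin n → Fin mx.1 => A fun i => mx.2 i (j i))
    (fun mx => ∏ i, weakLpNorm 𝕂 (p i) (mx.2 i))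
    (fun mx => Finset.prod_nonneg fun i _ => weakLpNorm_nonneg _ _) fun ι ψ hψ => by
      obtain ⟨G, _, _, _, u, hu, hnorm⟩ := exists_absolutelySummingOp_norm_rpow_eq.{uG} hs ψ hψ
      obtain ⟨C, -, hC⟩ := h G u hu
      refine ⟨C, fun mx => (hC mx.1 mx.2).trans_eq' ?_⟩
      simp only [lqlsNorm, ← hnorm, ← Real.rpow_mul (norm_nonneg _),
        mul_div_cancel₀ q (zero_lt_one.trans_le hs).ne']
  exact ⟨σ, hσ, fun m x => mixedNorm_le_of_forall_lqlsNorm_le (zero_lt_one.trans_le hq) hqs _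
    fun ι _ ψ hψ => hσA ι ψ hψ ⟨m, x⟩⟩

/-- Proposition `pp9`: if `u ∘ A` is multiple `(q;p₁,…,pₙ)`-summing for
every absolutely `s`-summing operator `u : F → G` (any Banach `G`), then `A` is multiple
`(s,q;p₁,…,pₙ)`-mixing summing. -/
theorem multipleMixingSumming_of_comp
    {𝕂 : Type*} [RCLike 𝕂] {n : ℕ} (hn : 1 ≤ n)
    (s q : ℝ) (p : Fin n → ℝ) (hp : ∀ k, 1 ≤ p k) (hpq : ∀ k, p k ≤ q) (hqs : q ≤ s)
    (E : Fin n → Type*) [∀ i, NormedAddCommGroup (E i)] [∀ i, NormedSpace 𝕂 (E i)]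
    [∀ i, CompleteSpace (E i)]
    (F : Type*) [NormedAddCommGroup F] [NormedSpace 𝕂 F] [CompleteSpace F]
    (A : ContinuousMultilinearMap 𝕂 E F)
    (h : ∀ (G : Type uG) [NormedAddCommGroup G] [NormedSpace 𝕂 G] [CompleteSpace G]
      (u : F →L[𝕂] G), AbsolutelySummingOp 𝕂 s u →
        MultipleSumming 𝕂 q p (fun x => u (A x))) :
    MultipleMixingSumming 𝕂 s q p (⇑A) :=
  multipleMixingSumming_of_comp_general hn s q p hp hpq hqs E F A h
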